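/- arXiv:2412.12321 — 2 statements merged into one kernel-verified Lean document; each statement's English description precedes it below -/
import Mathlib

section
/- In the same two-epoch instance (assignment cost −1, g_1(a) = δa, g_2(a) = δ(1−a), δ > 1), the 'myopic' policy that in epoch 1 minimizes only epoch-1 cost accepts 0 arrivals (epoch-1 myopic optimum value 0), and then the epoch-2 myopic optimum, starting from 0 accepted arrivals, equals −T/2 + δT/2, achieved by accepting all T/2 epoch-2 arrivals. Hence the gap between the total cost of the sequentially-myopic solution and the global optimum equals (−T/2 + δT/2) − (−T + δT/2) = T/2, which is Ω(T). -/
/-!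
Both myopic objectives are affine in the number `Z` of accepted arrivals: the epoch-1 cost is
`(δ - 1) Z`, increasing, so accepting nothing is optimal; the epoch-2 cost is `δ T - (1 + δ) Z`,
decreasing, so accepting all `T / 2` arrivals is optimal.
-/

section AffineMinimum

variable {R : Type*} [Ring R] [PartialOrder R] [IsOrderedRing R]

theorem isLeast_affine_natCast_of_nonneg {a : R} (ha : 0 ≤ a) (b : R) (N : ℕ) :
    IsLeast {c : R | ∃ Z : ℕ, Z ≤ N ∧ c = b + a * Z} b :=
  ⟨⟨0, N.zero_le, by simp⟩, by
    rintro c ⟨Z, -, rfl⟩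
    exact le_add_of_nonneg_right (mul_nonneg ha Z.cast_nonneg)⟩

theorem isLeast_affine_natCast_of_nonpos {a : R} (ha : a ≤ 0) (b : R) (N : ℕ) :
    IsLeast {c : R | ∃ Z : ℕ, Z ≤ N ∧ c = b + a * Z} (b + a * N) :=
  ⟨⟨N, le_rfl, rfl⟩, by
    rintro c ⟨Z, hZ, rfl⟩
    exact add_le_add_right (mul_le_mul_of_nonpos_left (Nat.mono_cast hZ) ha) b⟩

end AffineMinimum

/-- Failure of the myopic policy in the two-epoch instance (assignment cost −1,
g₁(a) = δa, g₂(a) = δ(1−a), δ > 1). The epoch-1 myopic optimum is 0, achieved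
by accepting 0 arrivals; the epoch-2 myopic optimum starting from 0 accepted
arrivals is −T/2 + δT/2, achieved by accepting all T/2 epoch-2 arrivals; and
the gap between the sequentially-myopic total cost and the global optimum is
(−T/2 + δT/2) − (−T + δT/2) = T/2, i.e. Ω(T). -/
theorem stmt1 (T : ℕ) (hT : 0 < T) (hTeven : Even T) (δ : ℝ) (hδ : 1 < δ)
    (myo₁ myo₂ : ℕ → ℝ)
    (hmyo₁ : ∀ Z₁ : ℕ, myo₁ Z₁ =
      -(Z₁ : ℝ) + ((T : ℝ) / 2) * δ * ((Z₁ : ℝ) / ((T : ℝ) / 2)))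
    (hmyo₂ : ∀ Z₂ : ℕ, myo₂ Z₂ =
      -(Z₂ : ℝ) + (T : ℝ) * δ * (1 - (Z₂ : ℝ) / (T : ℝ))) :
    (IsLeast {c : ℝ | ∃ Z₁ : ℕ, Z₁ ≤ T / 2 ∧ c = myo₁ Z₁} 0 ∧ myo₁ 0 = 0) ∧
    (IsLeast {c : ℝ | ∃ Z₂ : ℕ, Z₂ ≤ T / 2 ∧ c = myo₂ Z₂}
        (-(T : ℝ) / 2 + δ * T / 2) ∧
      myo₂ (T / 2) = -(T : ℝ) / 2 + δ * T / 2) ∧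
    (-(T : ℝ) / 2 + δ * T / 2) - (-(T : ℝ) + δ * T / 2) = (T : ℝ) / 2 := by
  have hT₀ : (T : ℝ) ≠ 0 := by positivity
  have hhalf : ((T / 2 : ℕ) : ℝ) = T / 2 := Nat.cast_div_charZero (even_iff_two_dvd.mp hTeven)
  have h₁ : ∀ Z : ℕ, myo₁ Z = 0 + (δ - 1) * Z := fun Z => by
    rw [hmyo₁]; field_simp; ring
  have h₂ : ∀ Z : ℕ, myo₂ Z = δ * T + -(1 + δ) * Z := fun Z => by
    rw [hmyo₂]; field_simp; ring
  have hval₂ : δ * T + -(1 + δ) * ((T / 2 : ℕ) : ℝ) = -(T : ℝ) / 2 + δ * T / 2 := by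
    rw [hhalf]; ring
  simp only [h₁, h₂]
  refine ⟨⟨isLeast_affine_natCast_of_nonneg (by linarith) 0 _, by simp⟩,
    ⟨hval₂ ▸ isLeast_affine_natCast_of_nonpos (by linarith) _ _, hval₂⟩, by ring⟩
end

section
/- Let ρ₁ ∈ [0,1] and ρ₂ ∈ [0,1] with ρ₁ ≠ ρ₂. Suppose an algorithm's acceptance fractions converge: the fraction accepted in epoch 1 tends to (ρ₁+ρ₂)/2 and the fraction accepted in epoch 2 tends to ρ₂ as T → ∞. Then the running average consumption at the end of the horizon tends to (1/2)·(ρ₁+ρ₂)/2 + (1/2)·ρ₂ = ρ₁/4 + 3ρ₂/4, and the end-of-epoch-1 running average tends to (ρ₁+ρ₂)/2, so there exists ε > 0 (namely ε = |ρ₁−ρ₂|/2 for epoch 1) such that for all sufficiently large T the epoch-1 running average consumption differs from the target ρ₁ by at least ε − o(1); hence the total deviation cost δ·(T/2)·|a₁ − ρ₁| + δ·T·|a₂ − ρ₂| is Ω(T). -/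
open Filter

theorem abs_midpoint_sub_left (ρ₁ ρ₂ : ℝ) : |(ρ₁ + ρ₂) / 2 - ρ₁| = |ρ₁ - ρ₂| / 2 := by
  rw [show (ρ₁ + ρ₂) / 2 - ρ₁ = (ρ₂ - ρ₁) / 2 by ring, abs_div, abs_sub_comm, abs_two]

theorem tendsto_abs_sub_left_of_tendsto_midpoint {α : Type*} {l : Filter α} {a : α → ℝ}
    {ρ₁ ρ₂ : ℝ} (ha : Tendsto a l (nhds ((ρ₁ + ρ₂) / 2))) :
    Tendsto (fun T => |a T - ρ₁|) l (nhds (|ρ₁ - ρ₂| / 2)) := by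
  simpa only [abs_midpoint_sub_left] using (ha.sub_const ρ₁).abs

theorem two_epoch_cost_ge {δ d : ℝ} (hδ : 0 < δ) {x y : ℕ → ℝ}
    (hx : ∀ᶠ T in atTop, d ≤ x T) (hy : ∀ T, 0 ≤ y T) :
    ∀ᶠ T : ℕ in atTop, δ * ((T : ℝ) / 2) * x T + δ * (T : ℝ) * y T ≥ δ * d / 2 * T := by
  filter_upwards [hx] with T hT
  have hT0 : (0 : ℝ) ≤ T := Nat.cast_nonneg T
  have h₁ : δ * ((T : ℝ) / 2) * d ≤ δ * ((T : ℝ) / 2) * x T :=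
    mul_le_mul_of_nonneg_left hT (by positivity)
  have h₂ : 0 ≤ δ * (T : ℝ) * y T := mul_nonneg (by positivity) (hy T)
  linarith

theorem stmt11_general (δ ρ₁ ρ₂ : ℝ) (hδ : 0 < δ)
    (hne : ρ₁ ≠ ρ₂) (a₁ a₂ : ℕ → ℝ)
    (ha₁ : Tendsto a₁ atTop (nhds ((ρ₁ + ρ₂) / 2)))
    (ha₂ : Tendsto a₂ atTop (nhds ρ₂)) :
    Tendsto (fun T => (a₁ T + a₂ T) / 2) atTop (nhds (ρ₁ / 4 + 3 * ρ₂ / 4)) ∧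
    Tendsto a₁ atTop (nhds ((ρ₁ + ρ₂) / 2)) ∧
    (∀ ε : ℝ, 0 < ε →
      ∀ᶠ T in atTop, |a₁ T - ρ₁| ≥ |ρ₁ - ρ₂| / 2 - ε) ∧
    ∃ C : ℝ, 0 < C ∧ ∀ᶠ T : ℕ in atTop,
      δ * ((T : ℝ) / 2) * |a₁ T - ρ₁| + δ * (T : ℝ) * |a₂ T - ρ₂| ≥ C * T := by
  have hdev := tendsto_abs_sub_left_of_tendsto_midpoint ha₁
  have hgap : 0 < |ρ₁ - ρ₂| := abs_pos.mpr (sub_ne_zero.mpr hne)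
  refine ⟨?_, ha₁, fun ε hε => hdev.eventually (eventually_ge_nhds (by linarith)), ?_⟩
  · convert (ha₁.add ha₂).div_const 2 using 2
    ring
  · refine ⟨δ * (|ρ₁ - ρ₂| / 4) / 2, by positivity, two_epoch_cost_ge hδ ?_ fun T => abs_nonneg _⟩
    exact hdev.eventually (eventually_ge_nhds (by linarith))

/-- Linear regret of the naive primal-dual algorithm (Proposition 2): if the
epoch-1 acceptance fraction a₁(T) → (ρ₁+ρ₂)/2 and the epoch-2 fraction
a₂(T) → ρ₂ with ρ₁ ≠ ρ₂, then the end-of-horizon running average tends to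
ρ₁/4 + 3ρ₂/4, the epoch-1 running average tends to (ρ₁+ρ₂)/2, eventually
|a₁(T) − ρ₁| ≥ |ρ₁−ρ₂|/2 − ε for every ε > 0, and the total deviation cost
δ·(T/2)·|a₁(T) − ρ₁| + δ·T·|a₂(T) − ρ₂| is Ω(T). -/
theorem stmt11 (δ ρ₁ ρ₂ : ℝ) (hδ : 0 < δ)
    (hρ₁ : ρ₁ ∈ Set.Icc (0 : ℝ) 1) (hρ₂ : ρ₂ ∈ Set.Icc (0 : ℝ) 1)
    (hne : ρ₁ ≠ ρ₂) (a₁ a₂ : ℕ → ℝ)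
    (ha₁ : Tendsto a₁ atTop (nhds ((ρ₁ + ρ₂) / 2)))
    (ha₂ : Tendsto a₂ atTop (nhds ρ₂)) :
    Tendsto (fun T => (a₁ T + a₂ T) / 2) atTop (nhds (ρ₁ / 4 + 3 * ρ₂ / 4)) ∧
    Tendsto a₁ atTop (nhds ((ρ₁ + ρ₂) / 2)) ∧
    (∀ ε : ℝ, 0 < ε →
      ∀ᶠ T in atTop, |a₁ T - ρ₁| ≥ |ρ₁ - ρ₂| / 2 - ε) ∧
    ∃ C : ℝ, 0 < C ∧ ∀ᶠ T : ℕ in atTop,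
      δ * ((T : ℝ) / 2) * |a₁ T - ρ₁| + δ * (T : ℝ) * |a₂ T - ρ₂| ≥ C * T :=
  stmt11_general δ ρ₁ ρ₂ hδ hne a₁ a₂ ha₁ ha₂
end
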